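/- Assume that κ_n² and ξ_n² are real for every n = 1,…,N and that ε := −(κ_nξ_n)/(κ_n^*ξ_n^*) does not depend on n. Writing 𝒜(λ)·Id = ∏_{k=1}^{p} A(q^kλ), ℬ(λ)·Id = ∏_{k=1}^{p} B(q^kλ), 𝒞(λ)·Id = ∏_{k=1}^{p} C(q^kλ), 𝒟(λ)·Id = ∏_{k=1}^{p} D(q^kλ) for the scalar-valued average functions, these scalars, viewed as functions of Λ = λ^p, satisfy (𝒜(Λ))^* = 𝒟(Λ^*) and (ℬ(Λ))^* = ε·𝒞(Λ^*) for every nonzero Λ. -/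

import Mathlib

/-!
Every entry of a Lax matrix `L_n(λ)` is a local operator at site `n`: a function of the clock
eigenvalue `v_n q^k` followed by a shift of `k`. Hence entries at different sites commute, and a
direct computation with `|u_n| = |v_n| = |q| = 1` and the reality conditions on `κ_n²`, `ξ_n²`
gives `L_n(λ)_{ij}^† = ε^{[i ≠ j]} L_n(λ^*)_{ī j̄}` (with `ī = 1 - i`). Because the entries of
the later factors commute with those of the earlier ones, this relation passes to products, so
`A(λ)^† = D(λ^*)` and `B(λ)^† = ε C(λ^*)`. The adjoint of a product over the orbit `q^k λ` is the
reversed product over the orbit of `q⁻¹ λ^*`, whose `p`-th power is `Λ^*`, and `ε^p = ε` because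
`ε² = 1` and `p` is odd.
-/

open Matrix Complex Filter Topology

namespace SG

/-- Index set for the basis of `(ℂ^p)^{⊗N}`. -/
abbrev Idx (p N : ℕ) := Fin N → ZMod p

/-- Operators on `(ℂ^p)^{⊗N}`, realized as matrices. -/
abbrev Op (p N : ℕ) := Matrix (Idx p N) (Idx p N) ℂ

/-- The square root of `q`: `q^{1/2} := q^{(p+1)/2}`. -/
noncomputable def qh (p : ℕ) (q : ℂ) : ℂ := q ^ ((p + 1) / 2)

/-- The operator `𝗎_n = u_n · (shift at site n)`, `𝗎_n|k⟩ = u_n |k-1⟩`. -/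
noncomputable def uop (p N : ℕ) (u : Fin N → ℂ) (n : Fin N) : Op p N :=
  Matrix.of fun f g => if f = Function.update g n (g n - 1) then u n else 0

/-- The inverse of `𝗎_n`. -/
noncomputable def uopInv (p N : ℕ) (u : Fin N → ℂ) (n : Fin N) : Op p N :=
  Matrix.of fun f g => if f = Function.update g n (g n + 1) then (u n)⁻¹ else 0

/-- The operator `𝗏_n = v_n · (clock at site n)`, `𝗏_n|k⟩ = v_n q^k |k⟩`. -/
noncomputable def vop (p N : ℕ) (q : ℂ) (v : Fin N → ℂ) (n : Fin N) : Op p N :=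
  Matrix.diagonal fun g => v n * q ^ (g n).val

/-- The inverse of `𝗏_n`. -/
noncomputable def vopInv (p N : ℕ) (q : ℂ) (v : Fin N → ℂ) (n : Fin N) : Op p N :=
  Matrix.diagonal fun g => (v n * q ^ (g n).val)⁻¹

/-- The Lax matrix `L_n(λ)`. -/
noncomputable def Lax (p N : ℕ) [NeZero p] (q : ℂ) (κ ξ u v : Fin N → ℂ) (n : Fin N)
    (lam : ℂ) : Matrix (Fin 2) (Fin 2) (Op p N) :=
  !![κ n • (uop p N u n *
        ((qh p q)⁻¹ • (κ n • vop p N q v n) + qh p q • ((κ n)⁻¹ • vopInv p N q v n))),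
     (κ n / Complex.I) • ((lam / ξ n) • vop p N q v n - (lam / ξ n)⁻¹ • vopInv p N q v n);
     (κ n / Complex.I) • ((lam / ξ n) • vopInv p N q v n - (lam / ξ n)⁻¹ • vop p N q v n),
     κ n • (uopInv p N u n *
        (qh p q • ((κ n)⁻¹ • vop p N q v n) + (qh p q)⁻¹ • (κ n • vopInv p N q v n)))]

/-- The monodromy matrix `M(λ) = L_N(λ) ⋯ L_1(λ)`. -/
noncomputable def Mon (p N : ℕ) [NeZero p] (q : ℂ) (κ ξ u v : Fin N → ℂ) (lam : ℂ) :
    Matrix (Fin 2) (Fin 2) (Op p N) :=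
  (((List.finRange N).map fun n => Lax p N q κ ξ u v n lam).reverse).prod

/-- `A(λ)`, the (1,1) entry of the monodromy matrix. -/
noncomputable def Amat (p N : ℕ) [NeZero p] (q : ℂ) (κ ξ u v : Fin N → ℂ) (lam : ℂ) :
    Op p N := Mon p N q κ ξ u v lam 0 0

/-- `B(λ)`, the (1,2) entry of the monodromy matrix. -/
noncomputable def Bmat (p N : ℕ) [NeZero p] (q : ℂ) (κ ξ u v : Fin N → ℂ) (lam : ℂ) :
    Op p N := Mon p N q κ ξ u v lam 0 1

/-- `C(λ)`, the (2,1) entry of the monodromy matrix. -/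
noncomputable def Cmat (p N : ℕ) [NeZero p] (q : ℂ) (κ ξ u v : Fin N → ℂ) (lam : ℂ) :
    Op p N := Mon p N q κ ξ u v lam 1 0

/-- `D(λ)`, the (2,2) entry of the monodromy matrix. -/
noncomputable def Dmat (p N : ℕ) [NeZero p] (q : ℂ) (κ ξ u v : Fin N → ℂ) (lam : ℂ) :
    Op p N := Mon p N q κ ξ u v lam 1 1

/-- The transfer matrix `T(λ) = A(λ) + D(λ)`. -/
noncomputable def Tmat (p N : ℕ) [NeZero p] (q : ℂ) (κ ξ u v : Fin N → ℂ) (lam : ℂ) :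
    Op p N := Amat p N q κ ξ u v lam + Dmat p N q κ ξ u v lam

/-- The grading charge `Θ = ∏_{n=1}^N 𝗏_n^{(-1)^n}` (sites `n : Fin N` correspond to
the 1-indexed site `n+1`, whence the exponent `(-1)^{n+1}`); it is a diagonal operator. -/
noncomputable def Theta (p N : ℕ) (q : ℂ) (v : Fin N → ℂ) : Op p N :=
  Matrix.diagonal fun g => ∏ n : Fin N, (v n * q ^ (g n).val) ^ ((-1 : ℤ) ^ ((n : ℕ) + 1))

/-- The inverse `Θ^{-1}` of the grading charge. -/
noncomputable def ThetaInv (p N : ℕ) (q : ℂ) (v : Fin N → ℂ) : Op p N :=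
  Matrix.diagonal fun g => ∏ n : Fin N, (v n * q ^ (g n).val) ^ ((-1 : ℤ) ^ (n : ℕ))

/-- The average `𝒪(λ) = ∏_{k=1}^p O(q^k λ)` of a commuting family `O`. -/
noncomputable def avg (p N : ℕ) [NeZero p] (q : ℂ) (O : ℂ → Op p N) (lam : ℂ) : Op p N :=
  ((List.range p).map fun k => O (q ^ (k + 1) * lam)).prod

open ComplexConjugate

section EntriesCommute
variable {R m : Type*} [Semiring R]

def EntriesCommute (X Y : Matrix m m R) : Prop :=
  ∀ i j k l, Commute (X i j) (Y k l)

lemma EntriesCommute.mul_right [Fintype m] {X Y Z : Matrix m m R}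
    (hY : EntriesCommute X Y) (hZ : EntriesCommute X Z) : EntriesCommute X (Y * Z) :=
  fun i j k l => by
    rw [mul_apply]
    exact Commute.sum_right _ _ _ fun r _ => (hY i j k r).mul_right (hZ i j r l)

lemma EntriesCommute.list_prod_right [Fintype m] [DecidableEq m] {X : Matrix m m R} :
    ∀ {Ys : List (Matrix m m R)}, (∀ Y ∈ Ys, EntriesCommute X Y) → EntriesCommute X Ys.prod
  | [], _ => fun i j k l => by
    rw [List.prod_nil, one_apply]
    split_ifs
    exacts [Commute.one_right _, Commute.zero_right _]
  | Y :: Ys, h => by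
    rw [List.prod_cons]
    exact (h Y List.mem_cons_self).mul_right
      (EntriesCommute.list_prod_right fun Z hZ => h Z (List.mem_cons_of_mem Y hZ))

end EntriesCommute

section TwistedAdjoint
variable {R : Type*} [Ring R] [StarRing R] [Algebra ℂ R]

def twist (ε : ℂ) (i j : Fin 2) : ℂ := if i = j then 1 else ε

lemma twist_mul_twist {ε : ℂ} (hε : ε * ε = 1) (i j k : Fin 2) :
    twist ε i j * twist ε j k = twist ε i k := by
  fin_cases i <;> fin_cases j <;> fin_cases k <;> simp [twist, hε]

/-- For `X = M(λ)` and `Y = M(λ^*)` this says `A^† = D`, `B^† = ε C`, `C^† = ε B`, `D^† = A`. -/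
def IsTwistedAdjoint (ε : ℂ) (X Y : Matrix (Fin 2) (Fin 2) R) : Prop :=
  ∀ i j, star (X i j) = twist ε i j • Y i.rev j.rev

lemma isTwistedAdjoint_one (ε : ℂ) : IsTwistedAdjoint ε (1 : Matrix (Fin 2) (Fin 2) R) 1 := by
  intro i j
  fin_cases i <;> fin_cases j <;> simp [twist]

lemma IsTwistedAdjoint.mul {ε : ℂ} (hε : ε * ε = 1) {X X' Y Y' : Matrix (Fin 2) (Fin 2) R}
    (h : IsTwistedAdjoint ε X Y) (h' : IsTwistedAdjoint ε X' Y') (hc : EntriesCommute Y Y') :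
    IsTwistedAdjoint ε (X * X') (Y * Y') := by
  intro i j
  calc star ((X * X') i j) = ∑ k, star (X' k j) * star (X i k) := by
        simp only [mul_apply, star_sum, star_mul]
    _ = ∑ k : Fin 2, twist ε i j • (Y i.rev k.rev * Y' k.rev j.rev) := by
        refine Finset.sum_congr rfl fun k _ => ?_
        rw [h i k, h' k j, smul_mul_smul_comm, ← (hc _ _ _ _).eq, mul_comm,
          twist_mul_twist hε]
    _ = twist ε i j • (Y * Y') i.rev j.rev := by
        rw [← Finset.smul_sum, mul_apply]
        exact congrArg _ (Fintype.sum_equiv Fin.revPerm _ _ fun _ => rfl)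

lemma IsTwistedAdjoint.list_prod {ε : ℂ} (hε : ε * ε = 1) :
    ∀ {Xs Ys : List (Matrix (Fin 2) (Fin 2) R)}, List.Forall₂ (IsTwistedAdjoint ε) Xs Ys →
      Ys.Pairwise EntriesCommute → IsTwistedAdjoint ε Xs.prod Ys.prod
  | [], [], _, _ => isTwistedAdjoint_one ε
  | X :: Xs, Y :: Ys, .cons h hs, hc => by
    rw [List.pairwise_cons] at hc
    rw [List.prod_cons, List.prod_cons]
    exact h.mul hε (list_prod hε hs hc.2) (EntriesCommute.list_prod_right hc.1)

end TwistedAdjoint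

lemma star_list_prod {M : Type*} [Monoid M] [StarMul M] :
    ∀ l : List M, star l.prod = (l.map star).reverse.prod
  | [] => by simp
  | a :: l => by simp [star_list_prod l]

section SiteOp
variable {ι G : Type*} [Fintype ι] [DecidableEq ι] [AddCommGroup G] [DecidableEq G]

/-- The operator `|g⟩ ↦ w (g n) |g + c eₙ⟩`: multiplication by a function of the `n`-th
coordinate, followed by a shift of that coordinate. -/
def siteOp (n : ι) (c : G) : (G → ℂ) →ₗ[ℂ] Matrix (ι → G) (ι → G) ℂ where
  toFun w := Matrix.of fun f g => if f = Function.update g n (g n + c) then w (g n) else 0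
  map_add' w w' := by ext f g; simp only [Matrix.add_apply, Matrix.of_apply]; split_ifs <;> simp
  map_smul' a w := by ext f g; simp [mul_ite]

lemma siteOp_apply (n : ι) (c : G) (w : G → ℂ) (f g : ι → G) :
    siteOp n c w f g = if f = Function.update g n (g n + c) then w (g n) else 0 := rfl

lemma siteOp_mul_apply [Fintype G] (n m : ι) (c c' : G) (w w' : G → ℂ) (f g : ι → G) :
    (siteOp n c w * siteOp m c' w') f g =
      siteOp n c w f (Function.update g m (g m + c')) * w' (g m) := by
  rw [Matrix.mul_apply, Finset.sum_eq_single (Function.update g m (g m + c'))]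
  · simp [siteOp_apply]
  · intro h _ hne; simp [siteOp_apply, if_neg hne]
  · simp

lemma siteOp_mul_siteOp [Fintype G] (n : ι) (c c' : G) (w w' : G → ℂ) :
    siteOp n c w * siteOp n c' w' = siteOp n (c + c') (fun k => w (k + c') * w' k) := by
  ext f g
  simp [siteOp_mul_apply, siteOp_apply, add_assoc, add_comm c c', ite_mul]

lemma siteOp_commute [Fintype G] {n m : ι} (hnm : n ≠ m) (c c' : G) (w w' : G → ℂ) :
    Commute (siteOp n c w) (siteOp m c' w') := by
  ext f g
  rw [siteOp_mul_apply, siteOp_mul_apply, siteOp_apply, siteOp_apply,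
    Function.update_of_ne hnm, Function.update_of_ne hnm.symm, Function.update_comm hnm.symm]
  split_ifs <;> ring

lemma star_siteOp (n : ι) (c : G) (w : G → ℂ) :
    star (siteOp n c w) = siteOp n (-c) (fun k => conj (w (k - c))) := by
  ext f g
  simp only [Matrix.star_apply, siteOp_apply]
  by_cases h : g = Function.update f n (f n + c)
  · subst h
    simp [RCLike.star_def]
  · have h' : f ≠ Function.update g n (g n + -c) := by
      rintro rfl; simp at h
    rw [if_neg h, if_neg h', star_zero]

lemma diagonal_eq_siteOp (n : ι) (w : G → ℂ) :
    Matrix.diagonal (fun g : ι → G => w (g n)) = siteOp n 0 w := by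
  ext f g
  by_cases h : f = g <;> simp [h, siteOp_apply]

end SiteOp

lemma pow_mod_of_pow_eq_one {M : Type*} [Monoid M] {x : M} {p : ℕ} (h : x ^ p = 1) (n : ℕ) :
    x ^ (n % p) = x ^ n := by
  conv_rhs => rw [← Nat.div_add_mod n p, pow_add, pow_mul, h, one_pow, one_mul]

lemma conj_eq_inv_of_norm_eq_one {z : ℂ} (hz : ‖z‖ = 1) : conj z = z⁻¹ :=
  (Complex.inv_eq_conj hz).symm

def clock {p : ℕ} (q v : ℂ) (k : ZMod p) : ℂ := v * q ^ k.val

section Clock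
variable {p : ℕ} [NeZero p] {q : ℂ}

lemma clock_add (hqp : q ^ p = 1) (v : ℂ) (k l : ZMod p) :
    clock q v (k + l) = clock q v k * q ^ l.val := by
  rw [clock, clock, ZMod.val_add, pow_mod_of_pow_eq_one hqp, pow_add, mul_assoc]

lemma clock_add_one (hqp : q ^ p = 1) (v : ℂ) (k : ZMod p) :
    clock q v (k + 1) = clock q v k * q := by
  rw [clock_add hqp, ZMod.val_one_eq_one_mod, pow_mod_of_pow_eq_one hqp, pow_one]

lemma clock_sub_one (hqp : q ^ p = 1) (hq : q ≠ 0) (v : ℂ) (k : ZMod p) :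
    clock q v (k - 1) = clock q v k * q⁻¹ := by
  rw [eq_mul_inv_iff_mul_eq₀ hq, ← clock_add_one hqp, sub_add_cancel]

lemma norm_clock (hqp : q ^ p = 1) {v : ℂ} (hv : ‖v‖ = 1) (k : ZMod p) : ‖clock q v k‖ = 1 := by
  rw [clock, norm_mul, norm_pow, Complex.norm_eq_one_of_pow_eq_one hqp (NeZero.ne p), hv,
    one_pow, one_mul]

lemma clock_ne_zero (hqp : q ^ p = 1) {v : ℂ} (hv : ‖v‖ = 1) (k : ZMod p) : clock q v k ≠ 0 :=
  norm_ne_zero_iff.mp (norm_clock hqp hv k ▸ one_ne_zero)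

lemma conj_clock (hqp : q ^ p = 1) {v : ℂ} (hv : ‖v‖ = 1) (k : ZMod p) :
    conj (clock q v k) = (clock q v k)⁻¹ :=
  conj_eq_inv_of_norm_eq_one (norm_clock hqp hv k)

end Clock

section LaxEntries
variable (p N : ℕ) (q : ℂ) (κ ξ u v : Fin N → ℂ) (n : Fin N) (lam : ℂ)

lemma uop_eq_siteOp : uop p N u n = siteOp n (-1) fun _ => u n := by
  ext f g; simp [uop, siteOp_apply, sub_eq_add_neg]

lemma uopInv_eq_siteOp : uopInv p N u n = siteOp n 1 fun _ => (u n)⁻¹ := by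
  ext f g; simp [uopInv, siteOp_apply]

lemma vop_eq_siteOp : vop p N q v n = siteOp n 0 (clock q (v n)) :=
  diagonal_eq_siteOp n (clock q (v n))

lemma vopInv_eq_siteOp : vopInv p N q v n = siteOp n 0 fun k => (clock q (v n) k)⁻¹ :=
  diagonal_eq_siteOp n fun k => (clock q (v n) k)⁻¹

variable [NeZero p]

lemma lax_apply_zero_zero : Lax p N q κ ξ u v n lam 0 0 =
    siteOp n (-1) fun k => κ n * (u n * ((qh p q)⁻¹ * (κ n * clock q (v n) k) +
      qh p q * ((κ n)⁻¹ * (clock q (v n) k)⁻¹))) := by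
  simp only [Lax, of_apply, cons_val', cons_val_zero, empty_val', cons_val_fin_one,
    uop_eq_siteOp, vop_eq_siteOp, vopInv_eq_siteOp, ← map_smul, ← map_add, siteOp_mul_siteOp,
    add_zero]
  rfl

lemma lax_apply_zero_one : Lax p N q κ ξ u v n lam 0 1 =
    siteOp n 0 fun k => κ n / I * (lam / ξ n * clock q (v n) k -
      (lam / ξ n)⁻¹ * (clock q (v n) k)⁻¹) := by
  simp only [Lax, of_apply, cons_val', cons_val_zero, cons_val_one, empty_val', cons_val_fin_one,
    vop_eq_siteOp, vopInv_eq_siteOp, ← map_smul, ← map_sub]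
  rfl

lemma lax_apply_one_zero : Lax p N q κ ξ u v n lam 1 0 =
    siteOp n 0 fun k => κ n / I * (lam / ξ n * (clock q (v n) k)⁻¹ -
      (lam / ξ n)⁻¹ * clock q (v n) k) := by
  simp only [Lax, of_apply, cons_val', cons_val_zero, cons_val_one, empty_val', cons_val_fin_one,
    vop_eq_siteOp, vopInv_eq_siteOp, ← map_smul, ← map_sub]
  rfl

lemma lax_apply_one_one : Lax p N q κ ξ u v n lam 1 1 =
    siteOp n 1 fun k => κ n * ((u n)⁻¹ * (qh p q * ((κ n)⁻¹ * clock q (v n) k) +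
      (qh p q)⁻¹ * (κ n * (clock q (v n) k)⁻¹))) := by
  simp only [Lax, of_apply, cons_val', cons_val_one, empty_val', cons_val_fin_one,
    uopInv_eq_siteOp, vop_eq_siteOp, vopInv_eq_siteOp, ← map_smul, ← map_add, siteOp_mul_siteOp,
    add_zero]
  rfl

lemma exists_siteOp_eq_lax_apply (i j : Fin 2) :
    ∃ c w, Lax p N q κ ξ u v n lam i j = siteOp n c w := by
  fin_cases i <;> fin_cases j
  exacts [⟨_, _, lax_apply_zero_zero p N q κ ξ u v n lam⟩,
    ⟨_, _, lax_apply_zero_one p N q κ ξ u v n lam⟩,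
    ⟨_, _, lax_apply_one_zero p N q κ ξ u v n lam⟩,
    ⟨_, _, lax_apply_one_one p N q κ ξ u v n lam⟩]

end LaxEntries

lemma conj_offDiagonal_weight {κ ξ ε : ℂ} (hκ : conj (κ ^ 2) = κ ^ 2) (hξ : conj (ξ ^ 2) = ξ ^ 2)
    (hκ0 : κ ≠ 0) (hξ0 : ξ ≠ 0) (hε : -(κ * ξ) / (conj κ * conj ξ) = ε)
    (lam a b : ℂ) (ha : conj a = b) (hb : conj b = a) :
    conj (κ / I * (lam / ξ * a - (lam / ξ)⁻¹ * b)) =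
      ε * (κ / I * (conj lam / ξ * b - (conj lam / ξ)⁻¹ * a)) := by
  rcases eq_or_ne lam 0 with rfl | hlam
  · simp
  have hlam' : conj lam ≠ 0 := by simpa using hlam
  have hκ' : conj κ ≠ 0 := by simpa using hκ0
  have hξ' : conj ξ ≠ 0 := by simpa using hξ0
  rw [map_pow] at hκ hξ
  simp only [map_mul, map_sub, map_div₀, map_inv₀, conj_I, ha, hb, ← hε]
  generalize conj lam = L at *
  generalize conj κ = κ' at *
  generalize conj ξ = ξ' at *
  field_simp
  linear_combination (ξ' ^ 2 * a - L ^ 2 * b) * hκ + κ ^ 2 * a * hξ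

lemma neg_div_conj_mul_self {κ ξ : ℂ} (hκ : conj (κ ^ 2) = κ ^ 2) (hξ : conj (ξ ^ 2) = ξ ^ 2)
    (hκ0 : κ ≠ 0) (hξ0 : ξ ≠ 0) :
    -(κ * ξ) / (conj κ * conj ξ) * (-(κ * ξ) / (conj κ * conj ξ)) = 1 := by
  have hκ' : conj κ ≠ 0 := by simpa using hκ0
  have hξ' : conj ξ ≠ 0 := by simpa using hξ0
  rw [map_pow] at hκ hξ
  field_simp
  linear_combination (-ξ ^ 2) * hκ - conj κ ^ 2 * hξ

lemma qh_sq {p : ℕ} {q : ℂ} (hp : Odd p) (hqp : q ^ p = 1) : qh p q ^ 2 = q := by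
  obtain ⟨m, rfl⟩ := hp
  rw [qh, ← pow_mul, show (2 * m + 1 + 1) / 2 * 2 = 2 * m + 1 + 1 by omega, pow_succ, hqp,
    one_mul]

section StarLax
variable {p N : ℕ} [NeZero p] {q : ℂ} {κ ξ u v : Fin N → ℂ} {n : Fin N}

lemma norm_qh (hqp : q ^ p = 1) : ‖qh p q‖ = 1 := by
  rw [qh, norm_pow, Complex.norm_eq_one_of_pow_eq_one hqp (NeZero.ne p), one_pow]

lemma star_lax_apply_zero_zero (hqp : q ^ p = 1) (hqh : qh p q ^ 2 = q)
    (hκ : conj (κ n ^ 2) = κ n ^ 2) (hκ0 : κ n ≠ 0) (hu : ‖u n‖ = 1) (hv : ‖v n‖ = 1)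
    (lam : ℂ) : star (Lax p N q κ ξ u v n lam 0 0) = Lax p N q κ ξ u v n (conj lam) 1 1 := by
  rw [lax_apply_zero_zero, star_siteOp, lax_apply_one_one, neg_neg]
  congr 1
  funext k
  simp only [sub_neg_eq_add, map_mul, map_add, map_inv₀,
    conj_eq_inv_of_norm_eq_one (norm_qh hqp), conj_eq_inv_of_norm_eq_one hu,
    conj_clock hqp hv (k + 1)]
  rw [clock_add_one hqp]
  have ha : clock q (v n) k ≠ 0 := clock_ne_zero hqp hv k
  have hs : qh p q ≠ 0 := norm_ne_zero_iff.mp (norm_qh hqp ▸ one_ne_zero)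
  have hκ' : conj (κ n) ≠ 0 := by simpa using hκ0
  rw [map_pow] at hκ
  generalize clock q (v n) k = a at *
  generalize conj (κ n) = κ' at *
  generalize qh p q = s at *
  subst hqh
  field_simp
  linear_combination (u n)⁻¹ * hκ

lemma star_lax_apply_one_one (hqp : q ^ p = 1) (hqh : qh p q ^ 2 = q)
    (hκ : conj (κ n ^ 2) = κ n ^ 2) (hκ0 : κ n ≠ 0) (hu : ‖u n‖ = 1) (hv : ‖v n‖ = 1)
    (lam : ℂ) : star (Lax p N q κ ξ u v n lam 1 1) = Lax p N q κ ξ u v n (conj lam) 0 0 := by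
  have hs : qh p q ≠ 0 := norm_ne_zero_iff.mp (norm_qh hqp ▸ one_ne_zero)
  rw [lax_apply_one_one, star_siteOp, lax_apply_zero_zero]
  congr 1
  funext k
  simp only [map_mul, map_add, map_inv₀,
    conj_eq_inv_of_norm_eq_one (norm_qh hqp), conj_eq_inv_of_norm_eq_one hu,
    conj_clock hqp hv (k - 1)]
  rw [clock_sub_one hqp (hqh ▸ pow_ne_zero 2 hs)]
  have ha : clock q (v n) k ≠ 0 := clock_ne_zero hqp hv k
  have hκ' : conj (κ n) ≠ 0 := by simpa using hκ0
  rw [map_pow] at hκ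
  generalize clock q (v n) k = a at *
  generalize conj (κ n) = κ' at *
  generalize qh p q = s at *
  subst hqh
  field_simp
  linear_combination u n * a ^ 2 * hκ

lemma star_lax_apply_zero_one (hqp : q ^ p = 1) (hκ : conj (κ n ^ 2) = κ n ^ 2)
    (hξ : conj (ξ n ^ 2) = ξ n ^ 2) (hκ0 : κ n ≠ 0) (hξ0 : ξ n ≠ 0) {ε : ℂ}
    (hε : -(κ n * ξ n) / (conj (κ n) * conj (ξ n)) = ε) (hv : ‖v n‖ = 1) (lam : ℂ) :
    star (Lax p N q κ ξ u v n lam 0 1) = ε • Lax p N q κ ξ u v n (conj lam) 1 0 := by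
  have hconj := conj_clock hqp hv
  rw [lax_apply_zero_one, star_siteOp, lax_apply_one_zero, ← map_smul, neg_zero]
  congr 1
  funext k
  rw [sub_zero, Pi.smul_apply, smul_eq_mul]
  exact conj_offDiagonal_weight hκ hξ hκ0 hξ0 hε lam _ _ (hconj k) (by rw [map_inv₀, hconj, inv_inv])

lemma star_lax_apply_one_zero (hqp : q ^ p = 1) (hκ : conj (κ n ^ 2) = κ n ^ 2)
    (hξ : conj (ξ n ^ 2) = ξ n ^ 2) (hκ0 : κ n ≠ 0) (hξ0 : ξ n ≠ 0) {ε : ℂ}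
    (hε : -(κ n * ξ n) / (conj (κ n) * conj (ξ n)) = ε) (hv : ‖v n‖ = 1) (lam : ℂ) :
    star (Lax p N q κ ξ u v n lam 1 0) = ε • Lax p N q κ ξ u v n (conj lam) 0 1 := by
  have hconj := conj_clock hqp hv
  rw [lax_apply_one_zero, star_siteOp, lax_apply_zero_one, ← map_smul, neg_zero]
  congr 1
  funext k
  rw [sub_zero, Pi.smul_apply, smul_eq_mul]
  exact conj_offDiagonal_weight hκ hξ hκ0 hξ0 hε lam _ _ (by rw [map_inv₀, hconj, inv_inv]) (hconj k)

end StarLax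

section Monodromy
variable {p N : ℕ} [NeZero p] {q : ℂ} {κ ξ u v : Fin N → ℂ}

lemma lax_entriesCommute {n m : Fin N} (hnm : n ≠ m) (lam mu : ℂ) :
    EntriesCommute (Lax p N q κ ξ u v n lam) (Lax p N q κ ξ u v m mu) := by
  intro i j k l
  obtain ⟨c, w, hc⟩ := exists_siteOp_eq_lax_apply p N q κ ξ u v n lam i j
  obtain ⟨c', w', hc'⟩ := exists_siteOp_eq_lax_apply p N q κ ξ u v m mu k l
  rw [hc, hc']
  exact siteOp_commute hnm c c' w w'

lemma lax_isTwistedAdjoint {n : Fin N} (hqp : q ^ p = 1) (hqh : qh p q ^ 2 = q)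
    (hκ : conj (κ n ^ 2) = κ n ^ 2) (hξ : conj (ξ n ^ 2) = ξ n ^ 2) (hκ0 : κ n ≠ 0)
    (hξ0 : ξ n ≠ 0) {ε : ℂ} (hε : -(κ n * ξ n) / (conj (κ n) * conj (ξ n)) = ε)
    (hu : ‖u n‖ = 1) (hv : ‖v n‖ = 1) (lam : ℂ) :
    IsTwistedAdjoint ε (Lax p N q κ ξ u v n lam) (Lax p N q κ ξ u v n (conj lam)) := by
  intro i j
  fin_cases i <;> fin_cases j
  · simpa [twist] using star_lax_apply_zero_zero hqp hqh hκ hκ0 hu hv lam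
  · simpa [twist] using star_lax_apply_zero_one hqp hκ hξ hκ0 hξ0 hε hv lam
  · simpa [twist] using star_lax_apply_one_zero hqp hκ hξ hκ0 hξ0 hε hv lam
  · simpa [twist] using star_lax_apply_one_one hqp hqh hκ hκ0 hu hv lam

lemma mon_isTwistedAdjoint (hqp : q ^ p = 1) (hqh : qh p q ^ 2 = q)
    (hκ : ∀ n, conj (κ n ^ 2) = κ n ^ 2) (hξ : ∀ n, conj (ξ n ^ 2) = ξ n ^ 2)
    (hκ0 : ∀ n, κ n ≠ 0) (hξ0 : ∀ n, ξ n ≠ 0) {ε : ℂ} (hε2 : ε * ε = 1)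
    (hε : ∀ n, -(κ n * ξ n) / (conj (κ n) * conj (ξ n)) = ε)
    (hu : ∀ n, ‖u n‖ = 1) (hv : ∀ n, ‖v n‖ = 1) (lam : ℂ) :
    IsTwistedAdjoint ε (Mon p N q κ ξ u v lam) (Mon p N q κ ξ u v (conj lam)) := by
  refine IsTwistedAdjoint.list_prod hε2 ?_ ?_
  · rw [List.forall₂_reverse_iff, List.forall₂_map_left_iff, List.forall₂_map_right_iff,
      List.forall₂_same]
    exact fun n _ => lax_isTwistedAdjoint hqp hqh (hκ n) (hξ n) (hκ0 n) (hξ0 n) (hε n)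
      (hu n) (hv n) lam
  · rw [List.pairwise_reverse, List.pairwise_map]
    exact (List.nodup_finRange N).imp fun hnm => lax_entriesCommute (Ne.symm hnm) _ _

end Monodromy

section Average
variable {p N : ℕ} [NeZero p] {q : ℂ}

lemma avg_smul (c : ℂ) (O : ℂ → Op p N) (lam : ℂ) :
    avg p N q (fun mu => c • O mu) lam = c ^ p • avg p N q O lam := by
  have h := List.smul_prod ((List.range p).map fun k => O (q ^ (k + 1) * lam)) c
  rw [List.length_map, List.length_range, List.map_map] at h
  exact h.symm

lemma star_avg (hqp : q ^ p = 1) {O O' : ℂ → Op p N} (h : ∀ mu, star (O mu) = O' (conj mu))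
    (lam : ℂ) : star (avg p N q O lam) = avg p N q O' (q⁻¹ * conj lam) := by
  have hq : q ≠ 0 := by rintro rfl; simp [NeZero.ne p] at hqp
  have hrev : (List.range p).reverse = (List.range p).map (p - 1 - ·) := by
    rw [List.range_eq_range', List.reverse_range', ← List.range_eq_range', Nat.zero_add]
  rw [avg, avg, star_list_prod, List.map_map, ← List.map_reverse, hrev, List.map_map]
  refine congrArg List.prod (List.map_congr_left fun k hk => ?_)
  have hkp : k < p := by simpa using hk
  simp only [Function.comp_apply, h, map_mul, map_pow,
    conj_eq_inv_of_norm_eq_one (Complex.norm_eq_one_of_pow_eq_one hqp (NeZero.ne p))]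
  congr 1
  rw [← mul_assoc, pow_succ q k, mul_inv_cancel_right₀ hq, inv_pow]
  congr 1
  refine inv_eq_of_mul_eq_one_left ?_
  rw [← pow_add, show k + (p - 1 - k + 1) = p by omega, hqp]

end Average

theorem statement5_general (p N : ℕ) [NeZero p] (hp : Odd p)
    (q : ℂ) (hq : IsPrimitiveRoot q p)
    (κ ξ u v : Fin N → ℂ) (hκ : ∀ n, κ n ≠ 0) (hξ : ∀ n, ξ n ≠ 0)
    (hu : ∀ n, ‖u n‖ = 1) (hv : ∀ n, ‖v n‖ = 1)
    (hN : 0 < N) (ε : ℂ)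
    (hκR : ∀ n, (starRingEnd ℂ) (κ n ^ 2) = κ n ^ 2)
    (hξR : ∀ n, (starRingEnd ℂ) (ξ n ^ 2) = ξ n ^ 2)
    (hε : ∀ n, -(κ n * ξ n) / ((starRingEnd ℂ) (κ n) * (starRingEnd ℂ) (ξ n)) = ε)
    (calA calB calC calD : ℂ → ℂ)
    (hA : ∀ lam : ℂ, lam ≠ 0 →
      avg p N q (Amat p N q κ ξ u v) lam = calA (lam ^ p) • (1 : Op p N))
    (hB : ∀ lam : ℂ, lam ≠ 0 →
      avg p N q (Bmat p N q κ ξ u v) lam = calB (lam ^ p) • (1 : Op p N))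
    (hC : ∀ lam : ℂ, lam ≠ 0 →
      avg p N q (Cmat p N q κ ξ u v) lam = calC (lam ^ p) • (1 : Op p N))
    (hD : ∀ lam : ℂ, lam ≠ 0 →
      avg p N q (Dmat p N q κ ξ u v) lam = calD (lam ^ p) • (1 : Op p N)) :
    ∀ Lam : ℂ, Lam ≠ 0 →
      (starRingEnd ℂ) (calA Lam) = calD ((starRingEnd ℂ) Lam) ∧
      (starRingEnd ℂ) (calB Lam) = ε * calC ((starRingEnd ℂ) Lam) := by
  intro Lam hLam
  have hqp : q ^ p = 1 := hq.pow_eq_one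
  have hε2 : ε * ε = 1 := hε ⟨0, hN⟩ ▸ neg_div_conj_mul_self (hκR _) (hξR _) (hκ _) (hξ _)
  have hεp : ε ^ p = ε := by
    obtain ⟨m, hm⟩ := hp
    rw [hm, pow_succ, pow_mul, sq, hε2, one_pow, one_mul]
  have hM := mon_isTwistedAdjoint hqp (qh_sq hp hqp) hκR hξR hκ hξ hε2 hε hu hv
  obtain ⟨lam, rfl⟩ := IsAlgClosed.exists_pow_nat_eq Lam (NeZero.pos p)
  have hlam : lam ≠ 0 := by rintro rfl; simp [NeZero.ne p] at hLam
  have hmu : (q⁻¹ * conj lam) ^ p = conj (lam ^ p) := by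
    rw [mul_pow, inv_pow, hqp, inv_one, one_mul, map_pow]
  have hmu0 : q⁻¹ * conj lam ≠ 0 := by
    rw [← pow_ne_zero_iff (NeZero.ne p), hmu]
    simpa using hLam
  have hAD := star_avg hqp (O := Amat p N q κ ξ u v) (O' := Dmat p N q κ ξ u v)
    (fun mu => by simpa [twist, Amat, Dmat] using hM mu 0 0) lam
  have hBC := star_avg hqp (O := Bmat p N q κ ξ u v) (O' := fun mu => ε • Cmat p N q κ ξ u v mu)
    (fun mu => by simpa [twist, Bmat, Cmat] using hM mu 0 1) lam
  rw [hA lam hlam, hD _ hmu0, hmu, star_smul, star_one] at hAD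
  rw [avg_smul, hB lam hlam, hC _ hmu0, hmu, star_smul, star_one, hεp, smul_smul] at hBC
  exact ⟨smul_left_injective ℂ one_ne_zero hAD, smul_left_injective ℂ one_ne_zero hBC⟩

/-- Under the reality conditions on `κ_n²`, `ξ_n²` and uniformity of
`ε = -(κ_nξ_n)/(κ_n^*ξ_n^*)`, the scalar average functions of `Λ = λ^p` satisfy
`(𝒜(Λ))^* = 𝒟(Λ^*)` and `(ℬ(Λ))^* = ε·𝒞(Λ^*)` for every nonzero `Λ`. -/
theorem statement5 (p N : ℕ) [NeZero p] (hp : Odd p) (hp1 : 1 < p)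
    (q : ℂ) (hq : IsPrimitiveRoot q p)
    (κ ξ u v : Fin N → ℂ) (hκ : ∀ n, κ n ≠ 0) (hξ : ∀ n, ξ n ≠ 0)
    (hu : ∀ n, ‖u n‖ = 1) (hv : ∀ n, ‖v n‖ = 1)
    (hN : 0 < N) (ε : ℂ)
    (hκR : ∀ n, (starRingEnd ℂ) (κ n ^ 2) = κ n ^ 2)
    (hξR : ∀ n, (starRingEnd ℂ) (ξ n ^ 2) = ξ n ^ 2)
    (hε : ∀ n, -(κ n * ξ n) / ((starRingEnd ℂ) (κ n) * (starRingEnd ℂ) (ξ n)) = ε)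
    (calA calB calC calD : ℂ → ℂ)
    (hA : ∀ lam : ℂ, lam ≠ 0 →
      avg p N q (Amat p N q κ ξ u v) lam = calA (lam ^ p) • (1 : Op p N))
    (hB : ∀ lam : ℂ, lam ≠ 0 →
      avg p N q (Bmat p N q κ ξ u v) lam = calB (lam ^ p) • (1 : Op p N))
    (hC : ∀ lam : ℂ, lam ≠ 0 →
      avg p N q (Cmat p N q κ ξ u v) lam = calC (lam ^ p) • (1 : Op p N))
    (hD : ∀ lam : ℂ, lam ≠ 0 →
      avg p N q (Dmat p N q κ ξ u v) lam = calD (lam ^ p) • (1 : Op p N)) :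
    ∀ Lam : ℂ, Lam ≠ 0 →
      (starRingEnd ℂ) (calA Lam) = calD ((starRingEnd ℂ) Lam) ∧
      (starRingEnd ℂ) (calB Lam) = ε * calC ((starRingEnd ℂ) Lam) :=
  statement5_general p N hp q hq κ ξ u v hκ hξ hu hv hN ε hκR hξR hε calA calB calC calD hA hB hC hD

end SG
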